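/- arXiv:0705.0318 — 2 statements merged into one kernel-verified Lean document; each statement's English description precedes it below -/
import Mathlib

section
/- For all natural numbers n and m, the integral over ℝ of h_n(t)·h_m(t) dt equals 1 if n = m and 0 otherwise, where h_n(t) = (2^n n! √π)^{-1/2} H_n(t) e^{-t²/2} and H_n is the n-th (physicists') Hermite polynomial. -/
open Real MeasureTheory Finset

/-- The physicists' Hermite polynomial `H_n(t) = (-1)^n e^{t^2} (d/dt)^n e^{-t^2}`. -/
noncomputable def hermiteH (n : ℕ) (t : ℝ) : ℝ :=
  (-1 : ℝ) ^ n * Real.exp (t ^ 2) * iteratedDeriv n (fun s => Real.exp (-s ^ 2)) t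

/-- The `L^2`-normalized Hermite function `h_n(t) = (2^n n! √π)^{-1/2} H_n(t) e^{-t^2/2}`. -/
noncomputable def hermiteh (n : ℕ) (t : ℝ) : ℝ :=
  (Real.sqrt (2 ^ n * n.factorial * Real.sqrt Real.pi))⁻¹ * hermiteH n t * Real.exp (-t ^ 2 / 2)

/-- The `d`-dimensional Hermite function `𝓗_α(x) = h_{α₁}(x₁)⋯h_{α_d}(x_d)`. -/
noncomputable def hermiteHd (d : ℕ) (α : Fin d → ℕ) (x : Fin d → ℝ) : ℝ :=
  ∏ j, hermiteh (α j) (x j)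

/-!
By definition `H_m(t) e^{-t²} = (-1)^m (d/dt)^m e^{-t²}`, and this is `P_m(t) e^{-t²}` for the
polynomial `P_m` given by `P_0 = 1`, `P_{m+1} = 2X P_m - P_m'`, which has degree at most `m` and
leading coefficient `2^m`. Since `d/dt (P_m e^{-t²}) = -P_{m+1} e^{-t²}`, integrating by parts
`m` times gives `∫ p H_m e^{-t²} = ∫ p^{(m)} e^{-t²}` for every polynomial `p`. For `p = H_n`
this vanishes when `n < m` and equals `2^n n! √π` when `n = m`.
-/

open Polynomial

namespace Polynomial

theorem iterate_derivative_of_natDegree_le {R : Type*} [Semiring R] {p : R[X]} {n : ℕ}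
    (hp : p.natDegree ≤ n) : derivative^[n] p = C (n.factorial • p.coeff n) := by
  rw [eq_C_of_natDegree_le_zero ((natDegree_iterate_derivative p n).trans (by omega)),
    coeff_iterate_derivative, zero_add, Nat.descFactorial_self]

end Polynomial

noncomputable def physHermite : ℕ → ℝ[X]
  | 0 => 1
  | n + 1 => 2 * X * physHermite n - derivative (physHermite n)

@[simp]
theorem physHermite_zero : physHermite 0 = 1 := rfl

theorem physHermite_succ (n : ℕ) :
    physHermite (n + 1) = 2 * X * physHermite n - derivative (physHermite n) := rfl

theorem natDegree_physHermite_le (n : ℕ) : (physHermite n).natDegree ≤ n := by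
  induction n with
  | zero => simp
  | succ n ih =>
    rw [physHermite_succ]
    refine (natDegree_sub_le _ _).trans (max_le ?_ ?_)
    · have h2X : (2 * X : ℝ[X]).natDegree ≤ 1 := natDegree_mul_le.trans (by simp)
      exact (natDegree_mul_le_of_le h2X ih).trans_eq (add_comm 1 n)
    · exact (natDegree_derivative_le _).trans (by omega)

theorem coeff_physHermite_self (n : ℕ) : (physHermite n).coeff n = 2 ^ n := by
  induction n with
  | zero => simp
  | succ n ih =>
    have hder : (derivative (physHermite n)).coeff (n + 1) = 0 :=
      coeff_eq_zero_of_natDegree_lt ((natDegree_derivative_le _).trans_lt (by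
        have := natDegree_physHermite_le n; omega))
    rw [physHermite_succ, coeff_sub, hder, mul_assoc, coeff_ofNat_mul, coeff_X_mul, ih, pow_succ]
    ring

theorem iterate_derivative_physHermite_self (n : ℕ) :
    derivative^[n] (physHermite n) = C ((2 : ℝ) ^ n * n.factorial) := by
  rw [iterate_derivative_of_natDegree_le (natDegree_physHermite_le n), coeff_physHermite_self,
    nsmul_eq_mul, mul_comm]

theorem hasDerivAt_eval_mul_gaussian (p : ℝ[X]) (x : ℝ) :
    HasDerivAt (fun t => p.eval t * exp (-t ^ 2))
      ((derivative p - 2 * X * p).eval x * exp (-x ^ 2)) x := by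
  have hexp : HasDerivAt (fun t : ℝ => exp (-t ^ 2)) (-(2 * x) * exp (-x ^ 2)) x := by
    simpa [mul_comm] using ((hasDerivAt_pow 2 x).neg).exp
  refine ((p.hasDerivAt x).mul hexp).congr_deriv ?_
  simp only [eval_sub, eval_mul, eval_X, eval_ofNat]
  ring

theorem iteratedDeriv_gaussian (n : ℕ) :
    iteratedDeriv n (fun s : ℝ => exp (-s ^ 2))
      = fun x => (-1) ^ n * ((physHermite n).eval x * exp (-x ^ 2)) := by
  induction n with
  | zero => simp
  | succ n ih =>
    ext x
    rw [iteratedDeriv_succ, ih]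
    refine ((hasDerivAt_eval_mul_gaussian _ x).const_mul _).deriv.trans ?_
    rw [physHermite_succ, pow_succ]
    simp only [eval_sub, eval_mul, eval_X, eval_ofNat]
    ring

theorem hermiteH_eq_eval (n : ℕ) (t : ℝ) : hermiteH n t = (physHermite n).eval t := by
  have hsign : ((-1 : ℝ) ^ n) * (-1) ^ n = 1 := by rw [← mul_pow]; simp
  have hexp : exp (t ^ 2) * exp (-t ^ 2) = 1 := by rw [← exp_add]; simp
  rw [hermiteH, iteratedDeriv_gaussian]
  calc _ = ((-1) ^ n * (-1) ^ n) * (exp (t ^ 2) * exp (-t ^ 2)) * (physHermite n).eval t := by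
        ring
    _ = (physHermite n).eval t := by rw [hsign, hexp, one_mul, one_mul]

theorem integrable_eval_mul_gaussian (p : ℝ[X]) :
    Integrable (fun t => p.eval t * exp (-t ^ 2)) := by
  induction p using Polynomial.induction_on' with
  | add p q hp hq =>
    simp only [eval_add, add_mul]
    exact hp.add hq
  | monomial k a =>
    have h := integrable_rpow_mul_exp_neg_mul_sq (b := 1) one_pos
      (s := (k : ℝ)) (neg_one_lt_zero.trans_le k.cast_nonneg)
    simpa [rpow_natCast, mul_assoc] using h.const_mul a

theorem integrable_eval_mul_eval_mul_gaussian (p q : ℝ[X]) :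
    Integrable (fun t => p.eval t * (q.eval t * exp (-t ^ 2))) := by
  simpa only [eval_mul, mul_assoc] using integrable_eval_mul_gaussian (p * q)

theorem integral_eval_mul_physHermite_succ_mul_gaussian (p : ℝ[X]) (m : ℕ) :
    ∫ t, p.eval t * ((physHermite (m + 1)).eval t * exp (-t ^ 2))
      = ∫ t, (derivative p).eval t * ((physHermite m).eval t * exp (-t ^ 2)) := by
  have hv (x : ℝ) : HasDerivAt (fun t => -((physHermite m).eval t * exp (-t ^ 2)))
      ((physHermite (m + 1)).eval x * exp (-x ^ 2)) x := by
    refine (hasDerivAt_eval_mul_gaussian _ x).neg.congr_deriv ?_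
    rw [physHermite_succ, ← neg_mul, ← eval_neg, neg_sub]
  have hint (q : ℝ[X]) :
      Integrable ((fun t => q.eval t) * fun t => -((physHermite m).eval t * exp (-t ^ 2))) := by
    simpa only [Pi.mul_def, mul_neg] using
      (integrable_eval_mul_eval_mul_gaussian q (physHermite m)).fun_neg
  have hparts := integral_mul_deriv_eq_deriv_mul_of_integrable (fun x _ => p.hasDerivAt x)
    (fun x _ => hv x) (integrable_eval_mul_eval_mul_gaussian p _) (hint (derivative p)) (hint p)
  simpa only [mul_neg, integral_neg, neg_neg] using hparts

theorem integral_eval_mul_physHermite_mul_gaussian (p : ℝ[X]) (m : ℕ) :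
    ∫ t, p.eval t * ((physHermite m).eval t * exp (-t ^ 2))
      = ∫ t, (derivative^[m] p).eval t * exp (-t ^ 2) := by
  induction m generalizing p with
  | zero => simp
  | succ m ih =>
    rw [integral_eval_mul_physHermite_succ_mul_gaussian, ih, Function.iterate_succ_apply]

theorem integral_physHermite_mul_physHermite_mul_gaussian_of_lt {n m : ℕ} (h : n < m) :
    ∫ t, (physHermite n).eval t * ((physHermite m).eval t * exp (-t ^ 2)) = 0 := by
  rw [integral_eval_mul_physHermite_mul_gaussian,
    iterate_derivative_eq_zero ((natDegree_physHermite_le n).trans_lt h)]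
  simp

theorem integral_physHermite_mul_physHermite_mul_gaussian (n m : ℕ) :
    ∫ t, (physHermite n).eval t * ((physHermite m).eval t * exp (-t ^ 2))
      = if n = m then 2 ^ n * n.factorial * √π else 0 := by
  rcases lt_trichotomy n m with h | rfl | h
  · rw [integral_physHermite_mul_physHermite_mul_gaussian_of_lt h, if_neg h.ne]
  · have hgauss : ∫ t : ℝ, exp (-t ^ 2) = √π := by simpa using integral_gaussian 1
    rw [integral_eval_mul_physHermite_mul_gaussian, iterate_derivative_physHermite_self, if_pos rfl]
    simp only [eval_C]
    rw [integral_const_mul, hgauss]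
  · simp_rw [mul_left_comm ((physHermite n).eval _)]
    rw [integral_physHermite_mul_physHermite_mul_gaussian_of_lt h, if_neg h.ne']

/-- Orthonormality of the Hermite functions on ℝ. -/
theorem hermiteh_orthonormal (n m : ℕ) :
    ∫ t : ℝ, hermiteh n t * hermiteh m t = if n = m then 1 else 0 := by
  have hprod (t : ℝ) : hermiteh n t * hermiteh m t
      = ((√(2 ^ n * n.factorial * √π))⁻¹ * (√(2 ^ m * m.factorial * √π))⁻¹)
        * ((physHermite n).eval t * ((physHermite m).eval t * exp (-t ^ 2))) := by
    have hexp : exp (-t ^ 2 / 2) * exp (-t ^ 2 / 2) = exp (-t ^ 2) := by rw [← exp_add]; ring_nf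
    simp only [hermiteh, hermiteH_eq_eval, ← hexp]
    ring
  simp_rw [hprod]
  rw [integral_const_mul, integral_physHermite_mul_physHermite_mul_gaussian]
  split_ifs with h
  · subst h
    have hpos : 0 < 2 ^ n * n.factorial * √π := by positivity
    rw [← mul_inv, mul_self_sqrt hpos.le, inv_mul_cancel₀ hpos.ne']
  · rw [mul_zero]
end

section
/- For every multi-index α ∈ ℕ^d, the d-dimensional Hermite function 𝓗_α is an eigenfunction of the Hermite operator D = −Δ + |x|² with eigenvalue 2|α| + d, i.e., (−Δ + |x|²)𝓗_α = (2|α| + d)𝓗_α. -/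
open Real MeasureTheory Finset

/-!
Mathlib's `Polynomial.hermite n` is the probabilists' polynomial `He_n`, and
`H_n(t) = 2^{n/2} He_n(√2 t)`. So `h_n(t)` is a multiple of `He_n(√2 t) e^{-t²/2}`, and the
one-dimensional equation `-h_n'' + t² h_n = (2n+1) h_n` is Hermite's differential equation
`He_n'' = X He_n' - n He_n` after the change of variables. The `d`-dimensional Hermite function
is a product of such functions in separate variables, so each `∂ⱼ²` only acts on one factor and
the eigenvalues add up.
-/

namespace Polynomial

theorem derivative_hermite_succ (n : ℕ) :
    derivative (hermite (n + 1)) = ((n : ℤ[X]) + 1) * hermite n := by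
  induction n with
  | zero => simp [hermite_zero]
  | succ m ih =>
    rw [hermite_succ (m + 1), derivative_sub, derivative_mul, derivative_X, one_mul, ih,
      derivative_mul, hermite_succ m]
    simp only [derivative_add, derivative_natCast, derivative_one]
    push_cast
    ring

theorem derivative_derivative_hermite (n : ℕ) :
    derivative (derivative (hermite n)) = X * derivative (hermite n) - (n : ℤ[X]) * hermite n := by
  cases n with
  | zero => simp [hermite_zero]
  | succ m =>
    rw [derivative_hermite_succ, derivative_mul, hermite_succ m]
    simp only [derivative_add, derivative_natCast, derivative_one]
    push_cast
    ring

end Polynomial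

open Polynomial

section scaledPolyGaussian

variable {R : Type*} [CommSemiring R] [Algebra R ℝ]

noncomputable def scaledPolyGaussian (p : R[X]) (t : ℝ) : ℝ :=
  aeval (√2 * t) p * exp (-t ^ 2 / 2)

theorem hasDerivAt_scaledPolyGaussian (p : R[X]) (t : ℝ) :
    HasDerivAt (scaledPolyGaussian p)
      (√2 * scaledPolyGaussian (derivative p) t - t * scaledPolyGaussian p t) t := by
  have hscale : HasDerivAt (fun s : ℝ => √2 * s) √2 t :=
    ((hasDerivAt_id t).const_mul √2).congr_deriv (mul_one _)
  have hpoly : HasDerivAt (fun s => aeval (√2 * s) p) (aeval (√2 * t) (derivative p) * √2) t :=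
    (p.hasDerivAt_aeval (√2 * t)).comp t hscale
  have hexponent : HasDerivAt (fun s : ℝ => -s ^ 2 / 2) (-t) t :=
    ((hasDerivAt_pow 2 t).neg.div_const 2).congr_deriv (by push_cast; ring)
  refine (hpoly.mul hexponent.exp).congr_deriv ?_
  simp only [scaledPolyGaussian]
  ring

theorem deriv_scaledPolyGaussian (p : R[X]) :
    deriv (scaledPolyGaussian p)
      = fun t => √2 * scaledPolyGaussian (derivative p) t - t * scaledPolyGaussian p t :=
  funext fun t => (hasDerivAt_scaledPolyGaussian p t).deriv

theorem iteratedDeriv_two_scaledPolyGaussian (p : R[X]) (t : ℝ) :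
    iteratedDeriv 2 (scaledPolyGaussian p) t =
      2 * scaledPolyGaussian (derivative (derivative p)) t
        - 2 * √2 * t * scaledPolyGaussian (derivative p) t
        + (t ^ 2 - 1) * scaledPolyGaussian p t := by
  rw [iteratedDeriv_succ, iteratedDeriv_one, deriv_scaledPolyGaussian]
  have h : HasDerivAt
      (fun s => √2 * scaledPolyGaussian (derivative p) s - s * scaledPolyGaussian p s) _ t :=
    ((hasDerivAt_scaledPolyGaussian (derivative p) t).const_mul √2).sub
      ((hasDerivAt_id' t).mul (hasDerivAt_scaledPolyGaussian p t))
  rw [h.deriv]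
  linear_combination scaledPolyGaussian (derivative (derivative p)) t
    * Real.mul_self_sqrt zero_le_two

end scaledPolyGaussian

theorem iteratedDeriv_two_scaledPolyGaussian_hermite (n : ℕ) (t : ℝ) :
    iteratedDeriv 2 (scaledPolyGaussian (hermite n)) t
      = (t ^ 2 - (2 * n + 1)) * scaledPolyGaussian (hermite n) t := by
  rw [iteratedDeriv_two_scaledPolyGaussian, derivative_derivative_hermite]
  simp only [scaledPolyGaussian, map_sub, map_mul, aeval_X, map_natCast]
  ring

theorem hermiteH_eq_aeval_hermite (n : ℕ) (t : ℝ) :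
    hermiteH n t = √2 ^ n * aeval (√2 * t) (hermite n) := by
  have hsq (s : ℝ) : (√2 * s) ^ 2 / 2 = s ^ 2 := by
    rw [mul_pow, Real.sq_sqrt zero_le_two]; ring
  have hgauss : (fun s : ℝ => exp (-s ^ 2)) = fun s => exp (-((√2 * s) ^ 2 / 2)) := by
    simp only [hsq]
  have hsmooth : ContDiff ℝ n fun y : ℝ => exp (-(y ^ 2 / 2)) := by fun_prop
  rw [hermiteH, hgauss, iteratedDeriv_comp_const_mul hsmooth, iteratedDeriv_eq_iterate]
  beta_reduce
  rw [deriv_gaussian_eq_hermite_mul_gaussian, hsq]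
  have hexp : exp (t ^ 2) * exp (-t ^ 2) = 1 := by rw [← exp_add]; simp
  have hsign : (-1 : ℝ) ^ n * (-1) ^ n = 1 := by rw [← mul_pow]; simp
  linear_combination (√2 ^ n * aeval (√2 * t) (hermite n)) * ((-1) ^ n * (-1) ^ n * hexp + hsign)

theorem hermiteh_eq_const_mul_scaledPolyGaussian (n : ℕ) :
    hermiteh n = fun t => ((√(2 ^ n * n.factorial * √π))⁻¹ * √2 ^ n)
      * scaledPolyGaussian (hermite n) t := by
  funext t
  rw [hermiteh, scaledPolyGaussian, hermiteH_eq_aeval_hermite]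
  ring

theorem iteratedDeriv_two_hermiteh (n : ℕ) (t : ℝ) :
    iteratedDeriv 2 (hermiteh n) t = (t ^ 2 - (2 * n + 1)) * hermiteh n t := by
  rw [hermiteh_eq_const_mul_scaledPolyGaussian, iteratedDeriv_const_mul_field,
    iteratedDeriv_two_scaledPolyGaussian_hermite]
  ring

theorem hermiteHd_update (d : ℕ) (α : Fin d → ℕ) (x : Fin d → ℝ) (j : Fin d) (s : ℝ) :
    hermiteHd d α (Function.update x j s)
      = (∏ i ∈ univ.erase j, hermiteh (α i) (x i)) * hermiteh (α j) s := by
  simp only [hermiteHd, Function.apply_update (fun i => hermiteh (α i)),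
    prod_update_of_mem (mem_univ j), sdiff_singleton_eq_erase, mul_comm]

theorem iteratedDeriv_two_hermiteHd_update (d : ℕ) (α : Fin d → ℕ) (x : Fin d → ℝ) (j : Fin d) :
    iteratedDeriv 2 (fun s => hermiteHd d α (Function.update x j s)) (x j)
      = (x j ^ 2 - (2 * α j + 1)) * hermiteHd d α x := by
  simp only [hermiteHd_update]
  rw [iteratedDeriv_const_mul_field, iteratedDeriv_two_hermiteh, hermiteHd,
    ← prod_erase_mul _ _ (mem_univ j)]
  ring

/-- The Hermite functions are eigenfunctions of the Hermite operator
`D = -Δ + |x|²` with eigenvalue `2|α| + d`. -/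
theorem hermiteHd_eigenfunction (d : ℕ) (α : Fin d → ℕ) (x : Fin d → ℝ) :
    -(∑ j, iteratedDeriv 2 (fun s => hermiteHd d α (Function.update x j s)) (x j))
      + (∑ j, (x j) ^ 2) * hermiteHd d α x
      = (2 * (∑ j, (α j : ℝ)) + d) * hermiteHd d α x := by
  simp only [iteratedDeriv_two_hermiteHd_update, ← sum_mul, sum_sub_distrib, sum_add_distrib,
    ← mul_sum, sum_const, card_univ, Fintype.card_fin, nsmul_eq_mul, mul_one]
  ring
end
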